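/- Fix an integer m ≥ 1. Let sₘ(n) be the number of permutations of [n] whose set of alternating descents is exactly {m, 2m, …, n−m} when m divides n (so sₘ(0)=1), and sₘ(n)=0 when m does not divide n; equivalently, sₘ(n) is the number of permutations of [n] all of whose alternating runs have length exactly m. Then in ℚ⟦X⟧: (Σ_{k=0}^∞ (−1)ᵏ·E_{mk}·X^{mk}/(mk)!) · (Σ_{n=0}^∞ sₘ(n)·Xⁿ/n!) = 1. -/

import Mathlib

/-- The entry of the permutation `σ` of `[n]` at (1-based) position `i`,
as a value in `{1, …, n}`; `0` if `i` is out of range. -/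
def permEnt {n : ℕ} (σ : Equiv.Perm (Fin n)) (i : ℕ) : ℕ :=
  if h : 1 ≤ i ∧ i ≤ n then (σ ⟨i - 1, by omega⟩ : ℕ) + 1 else 0

/-- `i` is a descent of `σ`: `1 ≤ i ≤ n−1` and `π_i > π_{i+1}`. -/
def IsDescent {n : ℕ} (σ : Equiv.Perm (Fin n)) (i : ℕ) : Prop :=
  1 ≤ i ∧ i < n ∧ permEnt σ (i + 1) < permEnt σ i

/-- `i` is an alternating descent of `σ`: `i` odd with `π_i > π_{i+1}`,
or `i` even with `π_i < π_{i+1}`. -/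
def IsAltDescent {n : ℕ} (σ : Equiv.Perm (Fin n)) (i : ℕ) : Prop :=
  1 ≤ i ∧ i < n ∧
    ((i % 2 = 1 ∧ permEnt σ (i + 1) < permEnt σ i) ∨
     (i % 2 = 0 ∧ permEnt σ i < permEnt σ (i + 1)))

instance {n : ℕ} (σ : Equiv.Perm (Fin n)) (i : ℕ) : Decidable (IsDescent σ i) := by
  unfold IsDescent; infer_instance

instance {n : ℕ} (σ : Equiv.Perm (Fin n)) (i : ℕ) : Decidable (IsAltDescent σ i) := by
  unfold IsAltDescent; infer_instance

/-- `i` is a peak of `σ`: `2 ≤ i ≤ n−1` and `π_{i−1} < π_i > π_{i+1}`. -/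
def IsPeak {n : ℕ} (σ : Equiv.Perm (Fin n)) (i : ℕ) : Prop :=
  2 ≤ i ∧ i < n ∧ permEnt σ (i - 1) < permEnt σ i ∧ permEnt σ (i + 1) < permEnt σ i

/-- `i` is a valley of `σ`: `2 ≤ i ≤ n−1` and `π_{i−1} > π_i < π_{i+1}`. -/
def IsValley {n : ℕ} (σ : Equiv.Perm (Fin n)) (i : ℕ) : Prop :=
  2 ≤ i ∧ i < n ∧ permEnt σ i < permEnt σ (i - 1) ∧ permEnt σ i < permEnt σ (i + 1)

/-- All valleys of `σ` are even and all peaks of `σ` are odd. -/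
def GoodPerm {n : ℕ} (σ : Equiv.Perm (Fin n)) : Prop :=
  (∀ i, IsValley σ i → i % 2 = 0) ∧ (∀ i, IsPeak σ i → i % 2 = 1)

/-- `f n` is the number of permutations of `[n]` with all valleys even and all peaks odd. -/
noncomputable def fCount (n : ℕ) : ℕ :=
  Nat.card {σ : Equiv.Perm (Fin n) // GoodPerm σ}

/-- `g n` is the number of permutations of `[n]` with all valleys even and all peaks odd
having no descent at position `n − 1`. -/
noncomputable def gCount (n : ℕ) : ℕ :=
  Nat.card {σ : Equiv.Perm (Fin n) // GoodPerm σ ∧ ¬ IsDescent σ (n - 1)}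

/-- `σ` is an alternating permutation: `π₁ > π₂ < π₃ > π₄ < ⋯`. -/
def IsAltPerm {n : ℕ} (σ : Equiv.Perm (Fin n)) : Prop :=
  ∀ i, 1 ≤ i → i < n →
    (i % 2 = 1 → permEnt σ (i + 1) < permEnt σ i) ∧
    (i % 2 = 0 → permEnt σ i < permEnt σ (i + 1))

/-- The Euler number `Eₙ`, the number of alternating permutations of `[n]`. -/
noncomputable def eulerNum (n : ℕ) : ℕ :=
  Nat.card {σ : Equiv.Perm (Fin n) // IsAltPerm σ}

/-- `sCount m n`: the number of permutations of `[n]` whose set of alternating descents is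
exactly `{m, 2m, …, n−m}` when `m ∣ n`, and `0` otherwise; equivalently, the number of
permutations of `[n]` all of whose alternating runs have length exactly `m`. -/
noncomputable def sCount (m n : ℕ) : ℕ :=
  if m ∣ n then
    Nat.card {σ : Equiv.Perm (Fin n) // ∀ i, IsAltDescent σ i ↔ (1 ≤ i ∧ i < n ∧ m ∣ i)}
  else 0

/-!
Write `E n` for the Euler numbers and `s n` for `sCount m n`. Shuffling a permutation of `[m c]`
without alternating descents (counted by `E (m c)`, since complementing values swaps alternating
descents and non-descents) with one of `[m d]` whose alternating descents are the multiples of `m`,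
on a chosen set of `m c` values, gives bijectively the permutations of `[m (c + d)]` whose
alternating descents away from `m c` are `{m (c + 1), …, m (c + d - 1)}`; complementing values
again absorbs the parity shift at the junction. So `C(m k, m c) E (m c) s (m (k - c))` counts
the permutations with alternating descent set `{m c', …, m (k - 1)}` for `c' ∈ {c, c + 1}`, and
the alternating sum over `c` telescopes to `0` for `k ≥ 1`. After substituting `X ↦ X ^ m` this is
the coefficient identity of the product.
-/

open Finset Equiv
open scoped Nat

section PermEnt

variable {n : ℕ}

lemma permEnt_of_mem (π : Perm (Fin n)) {i : ℕ} (h1 : 1 ≤ i) (h2 : i ≤ n) :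
    permEnt π i = π ⟨i - 1, by omega⟩ + 1 :=
  dif_pos ⟨h1, h2⟩

lemma permEnt_succ_lt_iff (π : Perm (Fin n)) {i : ℕ} (h1 : 1 ≤ i) (h2 : i < n) :
    permEnt π (i + 1) < permEnt π i ↔ π ⟨i, h2⟩ < π ⟨i - 1, by omega⟩ := by
  rw [permEnt_of_mem π h1 h2.le, permEnt_of_mem π (by omega) h2, Nat.add_lt_add_iff_right,
    Fin.val_fin_lt]
  rfl

lemma permEnt_succ_ne (π : Perm (Fin n)) {i : ℕ} (h1 : 1 ≤ i) (h2 : i < n) :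
    permEnt π (i + 1) ≠ permEnt π i := by
  rw [permEnt_of_mem π h1 h2.le, permEnt_of_mem π (by omega) h2]
  intro h
  have := congrArg Fin.val (π.injective (Fin.ext (Nat.add_right_cancel h)))
  simp only at this
  omega

lemma isAltDescent_iff_lt (π : Perm (Fin n)) {i : ℕ} (h1 : 1 ≤ i) (h2 : i < n) :
    IsAltDescent π i ↔ (i % 2 = 1 ↔ permEnt π (i + 1) < permEnt π i) := by
  have := permEnt_succ_ne π h1 h2
  unfold IsAltDescent
  omega

lemma permEnt_revPerm_mul_add (π : Perm (Fin n)) {i : ℕ} (h1 : 1 ≤ i) (h2 : i ≤ n) :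
    permEnt (Fin.revPerm * π) i + permEnt π i = n + 1 := by
  rw [permEnt_of_mem _ h1 h2, permEnt_of_mem _ h1 h2, Perm.mul_apply, Fin.revPerm_apply,
    Fin.val_rev]
  have := (π ⟨i - 1, by omega⟩).isLt
  omega

lemma isAltDescent_revPerm_mul (π : Perm (Fin n)) {i : ℕ} (h1 : 1 ≤ i) (h2 : i < n) :
    IsAltDescent (Fin.revPerm * π) i ↔ ¬ IsAltDescent π i := by
  rw [isAltDescent_iff_lt _ h1 h2, isAltDescent_iff_lt _ h1 h2]
  have := permEnt_revPerm_mul_add π h1 h2.le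
  have := permEnt_revPerm_mul_add π (i := i + 1) (by omega) h2
  have := permEnt_succ_ne π h1 h2
  omega

end PermEnt

noncomputable def altDesCount (n : ℕ) (D : Set ℕ) : ℕ :=
  Nat.card {π : Perm (Fin n) // ∀ i, 1 ≤ i → i < n → (IsAltDescent π i ↔ i ∈ D)}

lemma altDesCount_congr {n : ℕ} {D D' : Set ℕ} (h : ∀ i, 1 ≤ i → i < n → (i ∈ D ↔ i ∈ D')) :
    altDesCount n D = altDesCount n D' :=
  Nat.card_congr <| subtypeEquivRight fun _ =>
    forall_congr' fun i => imp_congr_right fun h1 => imp_congr_right fun h2 =>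
      iff_congr Iff.rfl (h i h1 h2)

lemma altDesCount_zero (D : Set ℕ) : altDesCount 0 D = 1 := by
  rw [altDesCount, Nat.card_eq_one_iff_unique]
  exact ⟨⟨fun _ _ => Subtype.ext (Subsingleton.elim _ _)⟩,
    ⟨⟨1, fun i _ h => absurd h (Nat.not_lt_zero i)⟩⟩⟩

lemma altDesCount_eq_card_not (n : ℕ) (D : Set ℕ) :
    altDesCount n D =
      Nat.card {π : Perm (Fin n) // ∀ i, 1 ≤ i → i < n → (¬ IsAltDescent π i ↔ i ∈ D)} :=
  Nat.card_congr <| (Equiv.mulLeft Fin.revPerm).subtypeEquiv fun π =>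
    forall_congr' fun i => forall_congr' fun h1 => forall_congr' fun h2 => by
      simp only [Equiv.coe_mulLeft]
      rw [isAltDescent_revPerm_mul π h1 h2, not_not]

lemma eulerNum_eq_altDesCount (n : ℕ) : eulerNum n = altDesCount n ∅ := by
  rw [altDesCount_eq_card_not]
  refine Nat.card_congr (subtypeEquivRight fun π => forall_congr' fun i =>
    forall_congr' fun h1 => forall_congr' fun h2 => ?_)
  rw [isAltDescent_iff_lt π h1 h2, Set.mem_empty_iff_false, iff_false, not_not]
  have := permEnt_succ_ne π h1 h2
  omega

lemma sCount_mul (m k : ℕ) : sCount m (m * k) = altDesCount (m * k) {i | m ∣ i} := by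
  rw [sCount, if_pos (dvd_mul_right m k)]
  refine Nat.card_congr (subtypeEquivRight fun π => ⟨fun h i h1 h2 => ?_, fun h i => ?_⟩)
  · simp [h i, h1, h2]
  · by_cases hi : 1 ≤ i ∧ i < m * k
    · simp [h i hi.1 hi.2, hi]
    · exact iff_of_false (fun hd => hi ⟨hd.1, hd.2.1⟩) (fun hd => hi ⟨hd.1, hd.2.1⟩)

lemma sCount_of_not_dvd {m n : ℕ} (h : ¬ m ∣ n) : sCount m n = 0 :=
  if_neg h

section Shuffle

variable {a b : ℕ}

lemma card_compl_eq_of_card_eq {A : Finset (Fin (a + b))} (hA : #A = a) : #Aᶜ = b := by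
  rw [card_compl, Fintype.card_fin, hA, Nat.add_sub_cancel_left]

/-- Lay out the pattern of `σ` on the values `A` in the first `a` positions, followed by the
pattern of `τ` on the values `Aᶜ`. -/
noncomputable def shuffle (A : Finset (Fin (a + b))) (hA : #A = a) (σ : Perm (Fin a))
    (τ : Perm (Fin b)) : Perm (Fin (a + b)) :=
  finSumFinEquiv.symm.trans <|
    (sumCongr σ τ).trans (finSumEquivOfFinset hA (card_compl_eq_of_card_eq hA))

variable (A : Finset (Fin (a + b))) (hA : #A = a) (σ : Perm (Fin a)) (τ : Perm (Fin b))

lemma shuffle_castAdd (i : Fin a) :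
    shuffle A hA σ τ (Fin.castAdd b i) = A.orderEmbOfFin hA (σ i) := by
  simp [shuffle]

lemma shuffle_natAdd (j : Fin b) :
    shuffle A hA σ τ (Fin.natAdd a j) =
      Aᶜ.orderEmbOfFin (card_compl_eq_of_card_eq hA) (τ j) := by
  simp [shuffle]

lemma isAltDescent_shuffle_left {i : ℕ} (h1 : 1 ≤ i) (h2 : i < a) :
    IsAltDescent (shuffle A hA σ τ) i ↔ IsAltDescent σ i := by
  rw [isAltDescent_iff_lt _ h1 (by omega), isAltDescent_iff_lt _ h1 h2,
    permEnt_succ_lt_iff _ h1 (by omega), permEnt_succ_lt_iff _ h1 h2,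
    show (⟨i, _⟩ : Fin (a + b)) = Fin.castAdd b ⟨i, h2⟩ from rfl,
    show (⟨i - 1, _⟩ : Fin (a + b)) = Fin.castAdd b ⟨i - 1, by omega⟩ from rfl,
    shuffle_castAdd, shuffle_castAdd, OrderEmbedding.lt_iff_lt]

lemma isAltDescent_shuffle_right {i : ℕ} (h1 : 1 ≤ i) (h2 : i < b) :
    IsAltDescent (shuffle A hA σ τ) (a + i) ↔ (IsAltDescent τ i ↔ a % 2 = 0) := by
  rw [isAltDescent_iff_lt _ (by omega) (by omega), isAltDescent_iff_lt _ h1 h2,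
    permEnt_succ_lt_iff _ (by omega) (by omega), permEnt_succ_lt_iff _ h1 h2]
  have hpred : (⟨a + i - 1, by omega⟩ : Fin (a + b)) = Fin.natAdd a ⟨i - 1, by omega⟩ :=
    Fin.ext (by simp; omega)
  rw [hpred, show (⟨a + i, _⟩ : Fin (a + b)) = Fin.natAdd a ⟨i, h2⟩ from rfl,
    shuffle_natAdd, shuffle_natAdd, OrderEmbedding.lt_iff_lt]
  omega

lemma coe_eq_range_shuffle_castAdd :
    (A : Set (Fin (a + b))) = Set.range (shuffle A hA σ τ ∘ Fin.castAdd b) := by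
  have : shuffle A hA σ τ ∘ Fin.castAdd b = A.orderEmbOfFin hA ∘ σ :=
    funext (shuffle_castAdd A hA σ τ)
  rw [this, EquivLike.range_comp, range_orderEmbOfFin]

lemma shuffle_injective :
    Function.Injective
      fun x : (Perm (Fin a) × Perm (Fin b)) × {A : Finset (Fin (a + b)) // #A = a} =>
        shuffle x.2.1 x.2.2 x.1.1 x.1.2 := by
  rintro ⟨⟨σ, τ⟩, ⟨A, hA⟩⟩ ⟨⟨σ', τ'⟩, ⟨A', hA'⟩⟩ h
  dsimp only at h
  obtain rfl : A = A' := coe_injective <| by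
    rw [coe_eq_range_shuffle_castAdd A hA σ τ, coe_eq_range_shuffle_castAdd A' hA' σ' τ', h]
  have hσ : σ = σ' := Equiv.ext fun i => (A.orderEmbOfFin hA).injective <| by
    rw [← shuffle_castAdd A hA σ τ, ← shuffle_castAdd A hA σ' τ', h]
  have hτ : τ = τ' := Equiv.ext fun j => (Aᶜ.orderEmbOfFin _).injective <| by
    rw [← shuffle_natAdd A hA σ τ, ← shuffle_natAdd A hA σ' τ', h]
  rw [hσ, hτ]

lemma shuffle_bijective :
    Function.Bijective
      fun x : (Perm (Fin a) × Perm (Fin b)) × {A : Finset (Fin (a + b)) // #A = a} =>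
        shuffle x.2.1 x.2.2 x.1.1 x.1.2 := by
  refine (Fintype.bijective_iff_injective_and_card _).2 ⟨shuffle_injective, ?_⟩
  simp only [Fintype.card_prod, Fintype.card_perm, Fintype.card_finset_len, Fintype.card_fin]
  rw [← Nat.choose_mul_factorial_mul_factorial (Nat.le_add_right a b), Nat.add_sub_cancel_left]
  ring

end Shuffle

noncomputable def altDesCountAway (n a : ℕ) (D : Set ℕ) : ℕ :=
  Nat.card {π : Perm (Fin n) // ∀ i, 1 ≤ i → i < n → i ≠ a → (IsAltDescent π i ↔ i ∈ D)}

lemma altDesCountAway_add (a b : ℕ) (D : Set ℕ) :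
    altDesCountAway (a + b) a D =
      altDesCount a D * altDesCount b {i | a + i ∈ D} * (a + b).choose a := by
  set P : Perm (Fin a) → Prop := fun σ => ∀ i, 1 ≤ i → i < a → (IsAltDescent σ i ↔ i ∈ D)
  set Q : Perm (Fin b) → Prop := fun τ =>
    ∀ i, 1 ≤ i → i < b → ((IsAltDescent τ i ↔ a % 2 = 0) ↔ a + i ∈ D)
  have hshuffle : ∀ x : (Perm (Fin a) × Perm (Fin b)) × {A : Finset (Fin (a + b)) // #A = a},
      (∀ i, 1 ≤ i → i < a + b → i ≠ a →
        (IsAltDescent (shuffle x.2.1 x.2.2 x.1.1 x.1.2) i ↔ i ∈ D)) ↔ P x.1.1 ∧ Q x.1.2 := by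
    rintro ⟨⟨σ, τ⟩, ⟨A, hA⟩⟩
    refine ⟨fun h => ⟨fun i h1 h2 => ?_, fun i h1 h2 => ?_⟩, fun ⟨hσ, hτ⟩ i h1 h2 ha => ?_⟩
    · rw [← isAltDescent_shuffle_left A hA σ τ h1 h2]
      exact h i h1 (by omega) (by omega)
    · rw [← isAltDescent_shuffle_right A hA σ τ h1 h2]
      exact h (a + i) (by omega) (by omega) (by omega)
    · rcases lt_or_gt_of_ne ha with hlt | hgt
      · rw [isAltDescent_shuffle_left A hA σ τ h1 hlt]
        exact hσ i h1 hlt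
      · obtain ⟨j, rfl⟩ := Nat.exists_eq_add_of_lt hgt
        rw [add_assoc, isAltDescent_shuffle_right A hA σ τ (by omega) (by omega)]
        exact hτ (j + 1) (by omega) (by omega)
  have hQ : Nat.card {τ // Q τ} = altDesCount b {i | a + i ∈ D} := by
    rcases Nat.mod_two_eq_zero_or_one a with ha | ha
    · simp only [Q, ha, iff_true]
      rfl
    · simp only [Q, ha, one_ne_zero, iff_false]
      exact (altDesCount_eq_card_not _ _).symm
  calc altDesCountAway (a + b) a D
      = Nat.card {x : (Perm (Fin a) × Perm (Fin b)) × {A : Finset (Fin (a + b)) // #A = a} //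
          P x.1.1 ∧ Q x.1.2} :=
        Nat.card_congr ((Equiv.ofBijective _ shuffle_bijective).subtypeEquiv
          fun x => (hshuffle x).symm).symm
    _ = Nat.card {σ // P σ} * Nat.card {τ // Q τ} *
          Nat.card {A : Finset (Fin (a + b)) // #A = a} := by
        rw [Nat.card_congr (prodSubtypeFstEquivSubtypeProd.trans (prodCongr subtypeProdEquivProd
          (Equiv.refl _))), Nat.card_prod, Nat.card_prod]
    _ = _ := by
        rw [hQ, Nat.card_eq_fintype_card (α := {A : Finset _ // _}), Fintype.card_finset_len,
          Fintype.card_fin]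
        rfl

lemma altDesCountAway_eq_add {n a : ℕ} {D : Set ℕ} (h1 : 1 ≤ a) (h2 : a < n) (haD : a ∉ D) :
    altDesCountAway n a D = altDesCount n (insert a D) + altDesCount n D := by
  set away : Perm (Fin n) → Prop :=
    fun π => ∀ i, 1 ≤ i → i < n → i ≠ a → (IsAltDescent π i ↔ i ∈ D)
  have hdes : ∀ π, away π ∧ IsAltDescent π a ↔
      ∀ i, 1 ≤ i → i < n → (IsAltDescent π i ↔ i ∈ insert a D) := fun π => by
    refine ⟨fun ⟨h, ha⟩ i hi1 hi2 => ?_, fun h => ⟨fun i hi1 hi2 hia => ?_, by simp [h a h1 h2]⟩⟩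
    · rcases eq_or_ne i a with rfl | hia
      · simp [ha]
      · simp [h i hi1 hi2 hia, hia]
    · simp [h i hi1 hi2, hia]
  have hnodes : ∀ π, away π ∧ ¬ IsAltDescent π a ↔
      ∀ i, 1 ≤ i → i < n → (IsAltDescent π i ↔ i ∈ D) := fun π => by
    refine ⟨fun ⟨h, ha⟩ i hi1 hi2 => ?_, fun h => ⟨fun i hi1 hi2 _ => h i hi1 hi2, ?_⟩⟩
    · rcases eq_or_ne i a with rfl | hia
      · simp [ha, haD]
      · exact h i hi1 hi2 hia
    · simp [h a h1 h2, haD]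
  rw [altDesCountAway,
    ← Nat.card_congr (Equiv.sumCompl fun π : Subtype away => IsAltDescent π.1 a), Nat.card_sum,
    altDesCount, altDesCount,
    Nat.card_congr ((subtypeSubtypeEquivSubtypeInter away _).trans (subtypeEquivRight hdes)),
    Nat.card_congr ((subtypeSubtypeEquivSubtypeInter away _).trans (subtypeEquivRight hnodes))]

lemma altDesCountAway_eq_altDesCount {n a : ℕ} (D : Set ℕ) (ha : a = 0 ∨ n ≤ a) :
    altDesCountAway n a D = altDesCount n D :=
  Nat.card_congr <| subtypeEquivRight fun _ =>
    forall_congr' fun i => forall_congr' fun h1 => forall_congr' fun h2 =>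
      ⟨fun h => h (by omega), fun h _ => h⟩

lemma sum_neg_one_pow_mul_altDesCountAway {m k : ℕ} (hm : 0 < m) (hk : 0 < k) :
    ∑ c ∈ range (k + 1),
      (-1 : ℤ) ^ c * altDesCountAway (m * k) (m * c) {i | m ∣ i ∧ m * c < i} = 0 := by
  set g : ℕ → ℤ := fun c =>
    if c = 0 ∨ k < c then 0 else altDesCount (m * k) {i | m ∣ i ∧ m * c ≤ i}
  have hg : ∀ c, 0 < c → c ≤ k → g c = altDesCount (m * k) {i | m ∣ i ∧ m * c ≤ i} :=
    fun c h1 h2 => if_neg (by omega)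
  have hg0 : g 0 = 0 := if_pos (Or.inl rfl)
  have hgk : g (k + 1) = 0 := if_pos (Or.inr k.lt_succ_self)
  have hsplit : ∀ c ∈ range (k + 1),
      (altDesCountAway (m * k) (m * c) {i | m ∣ i ∧ m * c < i} : ℤ) = g c + g (c + 1) := by
    intro c hc
    rw [mem_range] at hc
    rcases Nat.eq_zero_or_pos c with rfl | hc0
    · rw [altDesCountAway_eq_altDesCount _ (Or.inl (mul_zero m)), hg0, hg 1 one_pos hk, zero_add]
      congr 1
      refine altDesCount_congr fun i hi _ => and_congr_right fun hdvd => ?_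
      have := Nat.le_of_dvd hi hdvd
      omega
    rcases Nat.lt_or_ge c k with hck | hck
    · have hmc : m * c < m * k := (Nat.mul_lt_mul_left hm).2 hck
      rw [altDesCountAway_eq_add (Nat.mul_pos hm hc0) hmc (by simp), hg c hc0 hck.le,
        hg (c + 1) (by omega) hck, Nat.cast_add]
      congr 3
      · ext i
        simp only [Set.mem_insert_iff, Set.mem_ofPred_eq]
        refine ⟨?_, fun ⟨hdvd, hle⟩ => hle.eq_or_lt.imp Eq.symm (And.intro hdvd)⟩
        rintro (rfl | ⟨hdvd, hlt⟩)
        · exact ⟨dvd_mul_right m c, le_rfl⟩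
        · exact ⟨hdvd, hlt.le⟩
      · ext i
        simp only [Set.mem_ofPred_eq]
        refine and_congr_right fun ⟨j, hj⟩ => ?_
        rw [hj, Nat.mul_lt_mul_left hm, Nat.mul_le_mul_left_iff hm]
        omega
    · obtain rfl : c = k := by omega
      rw [altDesCountAway_eq_altDesCount _ (Or.inr le_rfl), hg c hc0 le_rfl, hgk, add_zero]
      congr 1
      refine altDesCount_congr fun i _ hi => ?_
      simp only [Set.mem_ofPred_eq]
      omega
  calc _ = ∑ c ∈ range (k + 1), ((-1 : ℤ) ^ c * g c - (-1) ^ (c + 1) * g (c + 1)) :=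
        sum_congr rfl fun c hc => by rw [hsplit c hc]; ring
    _ = 0 := by rw [sum_range_sub', hg0, hgk, mul_zero, mul_zero, sub_zero]

lemma eulerNum_mul_sCount_mul_choose (m c d : ℕ) :
    eulerNum (m * c) * sCount m (m * d) * (m * c + m * d).choose (m * c) =
      altDesCountAway (m * c + m * d) (m * c) {i | m ∣ i ∧ m * c < i} := by
  rw [altDesCountAway_add, eulerNum_eq_altDesCount, sCount_mul]
  congr 2
  · refine altDesCount_congr fun i _ hi => ?_
    simp only [Set.mem_empty_iff_false, Set.mem_ofPred_eq, false_iff, not_and, not_lt]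
    exact fun _ => hi.le
  · refine altDesCount_congr fun i hi _ => ?_
    simp only [Set.mem_ofPred_eq, Nat.dvd_add_right (dvd_mul_right m c)]
    omega

lemma sum_antidiagonal_eulerNum_mul_sCount {m k : ℕ} (hm : 0 < m) (hk : 0 < k) :
    ∑ p ∈ antidiagonal k, (-1 : ℚ) ^ p.1 * eulerNum (m * p.1) / (m * p.1)! *
      (sCount m (m * p.2) / (m * p.2)!) = 0 := by
  have hterm : ∀ p ∈ antidiagonal k, (-1 : ℚ) ^ p.1 * eulerNum (m * p.1) / (m * p.1)! *
      (sCount m (m * p.2) / (m * p.2)!) = (-1 : ℚ) ^ p.1 *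
        altDesCountAway (m * k) (m * p.1) {i | m ∣ i ∧ m * p.1 < i} / (m * k)! := by
    rintro ⟨c, d⟩ hp
    rw [HasAntidiagonal.mem_antidiagonal] at hp
    subst hp
    rw [mul_add, ← eulerNum_mul_sCount_mul_choose, Nat.cast_mul, Nat.cast_mul,
      Nat.cast_add_choose]
    field_simp
  rw [sum_congr rfl hterm, ← sum_div, Nat.sum_antidiagonal_eq_sum_range_succ_mk, div_eq_zero_iff]
  left
  exact_mod_cast sum_neg_one_pow_mul_altDesCountAway hm hk

lemma PowerSeries.expand_mk {R : Type*} [CommRing R] (p : ℕ) (hp : p ≠ 0) (f : ℕ → R) :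
    expand p hp (mk f) = mk fun n => if p ∣ n then f (n / p) else 0 := by
  ext n
  rw [coeff_expand, coeff_mk, coeff_mk]

lemma egf_eulerNum_mul_egf_sCount {m : ℕ} (hm : 0 < m) :
    PowerSeries.mk (fun k => (-1 : ℚ) ^ k * eulerNum (m * k) / (m * k)!) *
      PowerSeries.mk (fun k => (sCount m (m * k) : ℚ) / (m * k)!) = 1 := by
  ext k
  rw [PowerSeries.coeff_mul, PowerSeries.coeff_one]
  simp only [PowerSeries.coeff_mk]
  rcases Nat.eq_zero_or_pos k with rfl | hk
  · simp [eulerNum_eq_altDesCount, sCount_mul, altDesCount_zero]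
  · rw [if_neg hk.ne', sum_antidiagonal_eulerNum_mul_sCount hm hk]

/-- for `m ≥ 1`, in `ℚ⟦X⟧`,
`(Σ_k (−1)ᵏ·E_{mk}·X^{mk}/(mk)!) · (Σₙ sₘ(n)·Xⁿ/n!) = 1`. -/
theorem statement15 (m : ℕ) (hm : 1 ≤ m) :
    (PowerSeries.mk (fun n : ℕ =>
        if m ∣ n then ((-1 : ℚ)) ^ (n / m) * (eulerNum n : ℚ) / n.factorial else 0)) *
      (PowerSeries.mk (fun n : ℕ => (sCount m n : ℚ) / n.factorial)) = 1 := by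
  have hm0 : m ≠ 0 := by omega
  have hE : (PowerSeries.mk fun n : ℕ =>
      if m ∣ n then ((-1 : ℚ)) ^ (n / m) * (eulerNum n : ℚ) / n.factorial else 0) =
      PowerSeries.expand m hm0
        (PowerSeries.mk fun k => (-1 : ℚ) ^ k * eulerNum (m * k) / (m * k)!) := by
    rw [PowerSeries.expand_mk]
    congr 1
    funext n
    split_ifs with hn
    · rw [Nat.mul_div_cancel' hn]
    · rfl
  have hS : (PowerSeries.mk fun n : ℕ => (sCount m n : ℚ) / n.factorial) =
      PowerSeries.expand m hm0 (PowerSeries.mk fun k => (sCount m (m * k) : ℚ) / (m * k)!) := by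
    rw [PowerSeries.expand_mk]
    congr 1
    funext n
    split_ifs with hn
    · rw [Nat.mul_div_cancel' hn]
    · rw [sCount_of_not_dvd hn, Nat.cast_zero, zero_div]
  rw [hE, hS, ← map_mul, egf_eulerNum_mul_egf_sCount (by omega), map_one]
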